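/- arXiv:1101.1808 — 7 statements merged into one kernel-verified Lean document; each statement's English description precedes it below -/
import Mathlib

section
/- Under the abstract factorization hypotheses, for all integers N > n ≥ 0 one has the operator identity ℒ_N ∘ ℛ_{N−1} ∘ ℛ_{N−2} ∘ ⋯ ∘ ℛ_n = ℛ_{N−2} ∘ ℛ_{N−3} ∘ ⋯ ∘ ℛ_{n−1} ∘ ℒ_n + [∑_{k=n}^{N−1}(b_k − a_k)] · (ℛ_{N−2} ∘ ℛ_{N−3} ∘ ⋯ ∘ ℛ_n) as linear maps V_n → V_{N−1} (for n = 0 the first summand vanishes since ℒ_0 = 0). -/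
open scoped ComplexInnerProductSpace

noncomputable section

variable {V : ℕ → Type*} [∀ N, NormedAddCommGroup (V N)] [∀ N, InnerProductSpace ℂ (V N)]

/-- `RIter R n k` is the iterated raising operator
`ℛ_{n+k-1} ∘ ℛ_{n+k-2} ∘ ⋯ ∘ ℛ_n : V n → V (n+k)`. -/
def RIter (R : ∀ N, V N →ₗ[ℂ] V (N + 1)) (n : ℕ) : ∀ k : ℕ, V n →ₗ[ℂ] V (n + k)
  | 0 => LinearMap.id
  | k + 1 => (R (n + k)).comp (RIter R n k)

/-- The identity map `V i → V j` along an equality of indices. -/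
def vcastL {i j : ℕ} (h : i = j) : V i →ₗ[ℂ] V j := by subst h; exact LinearMap.id

/-- Under the abstract factorization hypotheses (here `L N = ℒ_{N+1}`, so that
`ℒ_N` is the adjoint of `ℛ_{N-1}`, `ℛ_{N-1}ℒ_N = -𝒟_N + a_N I` for `N ≥ 1`,
`ℒ_{N+1}ℛ_N = -𝒟_N + b_N I` for `N ≥ 0`, with the conventions `ℒ_0 = 0`, `𝒟_0 = a_0 I`),
for all `N > n ≥ 0` one has
`ℒ_N ∘ ℛ_{N-1} ∘ ⋯ ∘ ℛ_n = ℛ_{N-2} ∘ ⋯ ∘ ℛ_{n-1} ∘ ℒ_n + (∑_{k=n}^{N-1} (b_k - a_k)) • (ℛ_{N-2} ∘ ⋯ ∘ ℛ_n)`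
as linear maps `V n → V (N-1)`.  The case `n = m+1 ≥ 1` is the first clause (with `N = m+k+2`),
and the case `n = 0` (where the first summand vanishes since `ℒ_0 = 0`) is the second clause
(with `N = k+1`). -/
theorem lowering_commutes_with_iterated_raising
    [∀ N, FiniteDimensional ℂ (V N)]
    (hdim : ∀ N, Module.finrank ℂ (V N) = N + 1)
    (D : ∀ N, V N →ₗ[ℂ] V N) (hsym : ∀ N, (D N).IsSymmetric)
    (R : ∀ N, V N →ₗ[ℂ] V (N + 1)) (L : ∀ N, V (N + 1) →ₗ[ℂ] V N)
    (a b : ℕ → ℂ)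
    (hAdj : ∀ (N : ℕ) (f₁ : V N) (f₂ : V (N + 1)), ⟪R N f₁, f₂⟫ = ⟪f₁, L N f₂⟫)
    (hRL : ∀ N : ℕ, (R N).comp (L N) = -(D (N + 1)) + a (N + 1) • LinearMap.id)
    (hLR : ∀ N : ℕ, (L N).comp (R N) = -(D N) + b N • LinearMap.id)
    (hD0 : D 0 = a 0 • LinearMap.id) :
    (∀ m k : ℕ,
        (L (m + 1 + k)).comp (RIter R (m + 1) (k + 1)) =
          (vcastL (by omega : m + (k + 1) = m + 1 + k)).comp
              ((RIter R m (k + 1)).comp (L m)) +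
            (∑ i ∈ Finset.Ico (m + 1) (m + 1 + (k + 1)), (b i - a i)) • RIter R (m + 1) k) ∧
    (∀ k : ℕ,
        (L (0 + k)).comp (RIter R 0 (k + 1)) =
          (∑ i ∈ Finset.Ico 0 (0 + (k + 1)), (b i - a i)) • RIter R 0 k) := by
  have vid : ∀ (i : ℕ) (h : i = i), (vcastL h : V i →ₗ[ℂ] V i) = LinearMap.id := by
    intro i h; rfl
  have vnat : ∀ (i j : ℕ) (h : i = j) (h' : i + 1 = j + 1),
      (R j).comp (vcastL h) = (vcastL h' : V (i + 1) →ₗ[ℂ] V (j + 1)).comp (R i) := by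
    intro i j h h'; subst h; rw [vid, vid, LinearMap.comp_id, LinearMap.id_comp]
  have swap : ∀ N : ℕ, (L (N + 1)).comp (R (N + 1)) =
      (R N).comp (L N) + (b (N + 1) - a (N + 1)) • LinearMap.id := by
    intro N
    rw [hLR (N + 1), hRL N, sub_smul]
    abel
  have swap0 : (L 0).comp (R 0) = (b 0 - a 0) • LinearMap.id := by
    rw [hLR 0, hD0, sub_smul]
    abel
  constructor
  · intro m k
    induction k with
    | zero =>
      have hs : (∑ i ∈ Finset.Ico (m + 1) (m + 1 + (0 + 1)), (b i - a i)) =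
          b (m + 1) - a (m + 1) := by
        rw [Finset.sum_Ico_succ_top (by omega), Finset.Ico_self, Finset.sum_empty, zero_add]
      rw [hs]
      show (L (m + 1)).comp ((R (m + 1)).comp LinearMap.id) =
        (LinearMap.id : V (m + 1) →ₗ[ℂ] V (m + 1)).comp
          (((R m).comp LinearMap.id).comp (L m)) +
          (b (m + 1) - a (m + 1)) • (LinearMap.id : V (m + 1) →ₗ[ℂ] V (m + 1))
      rw [LinearMap.comp_id, LinearMap.comp_id, LinearMap.id_comp]
      exact swap m
    | succ k ih =>
      have hsum : (∑ i ∈ Finset.Ico (m + 1) (m + 1 + k + 1 + 1), (b i - a i)) =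
          (∑ i ∈ Finset.Ico (m + 1) (m + 1 + (k + 1)), (b i - a i)) +
            (b (m + 1 + k + 1) - a (m + 1 + k + 1)) := by
        rw [Finset.sum_Ico_succ_top (by omega)]
        rfl
      have e1 : (L (m + 1 + k + 1)).comp (RIter R (m + 1) (k + 1 + 1)) =
          (R (m + 1 + k)).comp ((L (m + 1 + k)).comp (RIter R (m + 1) (k + 1))) +
            (b (m + 1 + k + 1) - a (m + 1 + k + 1)) •
              ((R (m + 1 + k)).comp (RIter R (m + 1) k)) := by
        rw [show RIter R (m + 1) (k + 1 + 1) =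
            (R (m + 1 + k + 1)).comp (RIter R (m + 1) (k + 1)) from rfl,
          ← LinearMap.comp_assoc, swap (m + 1 + k), LinearMap.add_comp,
          LinearMap.smul_comp, LinearMap.id_comp, LinearMap.comp_assoc]
        rfl
      have e2 : (R (m + 1 + k)).comp ((L (m + 1 + k)).comp (RIter R (m + 1) (k + 1))) =
          (vcastL (by omega : m + (k + 1 + 1) = m + 1 + k + 1)).comp
              ((RIter R m (k + 1 + 1)).comp (L m)) +
            (∑ i ∈ Finset.Ico (m + 1) (m + 1 + (k + 1)), (b i - a i)) •
              ((R (m + 1 + k)).comp (RIter R (m + 1) k)) := by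
        rw [ih, LinearMap.comp_add, LinearMap.comp_smul, ← LinearMap.comp_assoc,
          vnat (m + (k + 1)) (m + 1 + k) (by omega) (by omega), LinearMap.comp_assoc]
        rfl
      show (L (m + 1 + k + 1)).comp (RIter R (m + 1) (k + 1 + 1)) =
        (vcastL (by omega : m + (k + 1 + 1) = m + 1 + k + 1)).comp
            ((RIter R m (k + 1 + 1)).comp (L m)) +
          (∑ i ∈ Finset.Ico (m + 1) (m + 1 + k + 1 + 1), (b i - a i)) •
            ((R (m + 1 + k)).comp (RIter R (m + 1) k))
      rw [e1, e2, hsum, add_smul]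
      exact add_assoc _ _ _
  · intro k
    induction k with
    | zero =>
      have hs : (∑ i ∈ Finset.Ico 0 (0 + (0 + 1)), (b i - a i)) = b 0 - a 0 := by
        rw [Finset.sum_Ico_succ_top (by omega), Finset.Ico_self, Finset.sum_empty, zero_add]
      rw [hs]
      show (L 0).comp ((R 0).comp LinearMap.id) =
        (b 0 - a 0) • (LinearMap.id : V 0 →ₗ[ℂ] V 0)
      rw [LinearMap.comp_id]
      exact swap0
    | succ k ih =>
      have hsum : (∑ i ∈ Finset.Ico 0 (0 + k + 1 + 1), (b i - a i)) =
          (∑ i ∈ Finset.Ico 0 (0 + (k + 1)), (b i - a i)) +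
            (b (0 + k + 1) - a (0 + k + 1)) := by
        rw [Finset.sum_Ico_succ_top (by omega)]
        rfl
      have e1 : (L (0 + k + 1)).comp (RIter R 0 (k + 1 + 1)) =
          (R (0 + k)).comp ((L (0 + k)).comp (RIter R 0 (k + 1))) +
            (b (0 + k + 1) - a (0 + k + 1)) • ((R (0 + k)).comp (RIter R 0 k)) := by
        rw [show RIter R 0 (k + 1 + 1) = (R (0 + k + 1)).comp (RIter R 0 (k + 1)) from rfl,
          ← LinearMap.comp_assoc, swap (0 + k), LinearMap.add_comp,
          LinearMap.smul_comp, LinearMap.id_comp, LinearMap.comp_assoc]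
        rfl
      show (L (0 + k + 1)).comp (RIter R 0 (k + 1 + 1)) =
        (∑ i ∈ Finset.Ico 0 (0 + k + 1 + 1), (b i - a i)) • ((R (0 + k)).comp (RIter R 0 k))
      rw [e1, ih, LinearMap.comp_smul, hsum, add_smul]
end
end

section
/- Under the abstract factorization hypotheses, if 0 ≤ n ≤ m ≤ N and f ∈ V_n satisfies ℒ_n f = 0, then ℒ_{m+1} ℒ_{m+2} ⋯ ℒ_N ℛ_{N−1} ℛ_{N−2} ⋯ ℛ_n f = [∏_{h=m}^{N−1} ∑_{k=n}^{h}(b_k − a_k)] · ℛ_{m−1} ℛ_{m−2} ⋯ ℛ_n f in V_m (for m = N the product is empty and equals 1, and for m = n the right-hand vector is f itself). -/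
open scoped ComplexInnerProductSpace

noncomputable section

variable {V : ℕ → Type*} [∀ N, NormedAddCommGroup (V N)] [∀ N, InnerProductSpace ℂ (V N)]

/-- `LIter L m k` is the iterated lowering operator
`ℒ_{m+1} ∘ ℒ_{m+2} ∘ ⋯ ∘ ℒ_{m+k} : V (m+k) → V m` (here `L N = ℒ_{N+1}`). -/
def LIter (L : ∀ N, V (N + 1) →ₗ[ℂ] V N) (m : ℕ) : ∀ k : ℕ, V (m + k) →ₗ[ℂ] V m
  | 0 => LinearMap.id
  | k + 1 => (LIter L m k).comp (L (m + k))

/-- `KerL L n f` says `ℒ_n f = 0`, with the convention `ℒ_0 = 0` (so that for `n = 0` every `f`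
qualifies). -/
def KerL (L : ∀ N, V (N + 1) →ₗ[ℂ] V N) : ∀ n : ℕ, V n → Prop
  | 0, _ => True
  | m + 1, f => L m f = 0

/-!
By (ii), `ℒ_n f = 0` makes `f` an eigenvector of `𝒟_n` with eigenvalue `a_n`. If `g ∈ V_h` is an
eigenvector of `𝒟_h` with eigenvalue `a_h - c`, then (iii) gives `ℒ_{h+1} ℛ_h g = (c + b_h - a_h) g`,
and applying `ℛ_h` to this and using (ii) shows that `ℛ_h g` is an eigenvector of `𝒟_{h+1}` with
eigenvalue `a_{h+1} - (c + b_h - a_h)`. Hence `ℛ_{h-1} ⋯ ℛ_n f` has `𝒟_h`-eigenvalue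
`a_h - ∑_{i=n}^{h-1} (b_i - a_i)`, and the lowering operators strip off the raising operators one at a
time, each contributing the scalar factor `∑_{i=n}^{h} (b_i - a_i)`.
-/

open Finset

section Factorization

variable {D : ∀ N, V N →ₗ[ℂ] V N} {R : ∀ N, V N →ₗ[ℂ] V (N + 1)}
  {L : ∀ N, V (N + 1) →ₗ[ℂ] V N} {a b : ℕ → ℂ}

theorem D_apply_of_kerL (hRL : ∀ N, (R N).comp (L N) = -(D (N + 1)) + a (N + 1) • LinearMap.id)
    (hD0 : D 0 = a 0 • LinearMap.id) {n : ℕ} {f : V n} (hf : KerL L n f) :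
    D n f = a n • f := by
  cases n with
  | zero => simp [hD0]
  | succ m =>
    have h := LinearMap.congr_fun (hRL m) f
    rw [LinearMap.comp_apply, show L m f = 0 from hf, map_zero] at h
    simp only [LinearMap.add_apply, LinearMap.neg_apply,
      LinearMap.smul_apply, LinearMap.id_apply] at h
    linear_combination (norm := module) h

theorem lower_raise_of_eigen (hLR : ∀ N, (L N).comp (R N) = -(D N) + b N • LinearMap.id)
    {m : ℕ} {g : V m} {c : ℂ} (hg : D m g = (a m - c) • g) :
    L m (R m g) = (c + (b m - a m)) • g := by
  rw [← LinearMap.comp_apply, hLR]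
  simp only [LinearMap.add_apply, LinearMap.neg_apply, LinearMap.smul_apply, LinearMap.id_apply,
    hg]
  module

theorem D_raise_of_eigen
    (hRL : ∀ N, (R N).comp (L N) = -(D (N + 1)) + a (N + 1) • LinearMap.id)
    (hLR : ∀ N, (L N).comp (R N) = -(D N) + b N • LinearMap.id)
    {m : ℕ} {g : V m} {c : ℂ} (hg : D m g = (a m - c) • g) :
    D (m + 1) (R m g) = (a (m + 1) - (c + (b m - a m))) • R m g := by
  have h := congrArg (R m) (lower_raise_of_eigen hLR hg)
  rw [← LinearMap.comp_apply, hRL, map_smul] at h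
  simp only [LinearMap.add_apply, LinearMap.neg_apply, LinearMap.smul_apply,
    LinearMap.id_apply] at h
  linear_combination (norm := module) -h

theorem D_RIter_of_eigen
    (hRL : ∀ N, (R N).comp (L N) = -(D (N + 1)) + a (N + 1) • LinearMap.id)
    (hLR : ∀ N, (L N).comp (R N) = -(D N) + b N • LinearMap.id)
    {n m : ℕ} (hnm : n ≤ m) {g : V m}
    (hg : D m g = (a m - ∑ i ∈ Ico n m, (b i - a i)) • g) (k : ℕ) :
    D (m + k) (RIter R m k g) = (a (m + k) - ∑ i ∈ Ico n (m + k), (b i - a i)) • RIter R m k g := by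
  induction k with
  | zero => exact hg
  | succ k ih =>
    change D (m + k + 1) (R (m + k) (RIter R m k g)) =
      (a (m + k + 1) - ∑ i ∈ Ico n (m + k + 1), (b i - a i)) • R (m + k) (RIter R m k g)
    rw [sum_Ico_succ_top (hnm.trans (Nat.le_add_right m k))]
    exact D_raise_of_eigen hRL hLR ih

theorem LIter_RIter_of_eigen
    (hRL : ∀ N, (R N).comp (L N) = -(D (N + 1)) + a (N + 1) • LinearMap.id)
    (hLR : ∀ N, (L N).comp (R N) = -(D N) + b N • LinearMap.id)
    {n m : ℕ} (hnm : n ≤ m) {g : V m}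
    (hg : D m g = (a m - ∑ i ∈ Ico n m, (b i - a i)) • g) (k : ℕ) :
    LIter L m k (RIter R m k g) = (∏ h ∈ Ico m (m + k), ∑ i ∈ Icc n h, (b i - a i)) • g := by
  induction k with
  | zero => simp [LIter, RIter]
  | succ k ih =>
    have hle : n ≤ m + k := hnm.trans (Nat.le_add_right m k)
    have hlower := lower_raise_of_eigen hLR (D_RIter_of_eigen hRL hLR hnm hg k)
    rw [← sum_Ico_succ_top hle, Ico_add_one_right_eq_Icc] at hlower
    change LIter L m k (L (m + k) (R (m + k) (RIter R m k g))) = _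
    rw [hlower, map_smul, ih, ← add_assoc, prod_Ico_succ_top (Nat.le_add_right m k), smul_smul,
      mul_comm]

end Factorization

theorem iterated_lowering_of_iterated_raising_general
    (D : ∀ N, V N →ₗ[ℂ] V N)
    (R : ∀ N, V N →ₗ[ℂ] V (N + 1)) (L : ∀ N, V (N + 1) →ₗ[ℂ] V N)
    (a b : ℕ → ℂ)
    (hRL : ∀ N : ℕ, (R N).comp (L N) = -(D (N + 1)) + a (N + 1) • LinearMap.id)
    (hLR : ∀ N : ℕ, (L N).comp (R N) = -(D N) + b N • LinearMap.id)
    (hD0 : D 0 = a 0 • LinearMap.id)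
    (n j k : ℕ) (f : V n) (hf : KerL L n f) :
    LIter L (n + j) k (RIter R (n + j) k (RIter R n j f)) =
      (∏ h ∈ Finset.Ico (n + j) (n + j + k), ∑ i ∈ Finset.Icc n h, (b i - a i)) •
        RIter R n j f := by
  have hDf : D n f = (a n - ∑ i ∈ Ico n n, (b i - a i)) • f := by
    simpa using D_apply_of_kerL hRL hD0 hf
  exact LIter_RIter_of_eigen hRL hLR (Nat.le_add_right n j)
    (D_RIter_of_eigen hRL hLR le_rfl hDf j) k

/-- Under the abstract factorization hypotheses, if `0 ≤ n ≤ m ≤ N` (here `m = n + j`,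
`N = n + j + k`) and `f ∈ V n` satisfies `ℒ_n f = 0`, then
`ℒ_{m+1} ℒ_{m+2} ⋯ ℒ_N ℛ_{N-1} ℛ_{N-2} ⋯ ℛ_n f
  = (∏_{h=m}^{N-1} ∑_{k'=n}^{h} (b_{k'} - a_{k'})) • ℛ_{m-1} ℛ_{m-2} ⋯ ℛ_n f` in `V m`. -/
theorem iterated_lowering_of_iterated_raising
    [∀ N, FiniteDimensional ℂ (V N)]
    (hdim : ∀ N, Module.finrank ℂ (V N) = N + 1)
    (D : ∀ N, V N →ₗ[ℂ] V N) (hsym : ∀ N, (D N).IsSymmetric)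
    (R : ∀ N, V N →ₗ[ℂ] V (N + 1)) (L : ∀ N, V (N + 1) →ₗ[ℂ] V N)
    (a b : ℕ → ℂ)
    (hAdj : ∀ (N : ℕ) (f₁ : V N) (f₂ : V (N + 1)), ⟪R N f₁, f₂⟫ = ⟪f₁, L N f₂⟫)
    (hRL : ∀ N : ℕ, (R N).comp (L N) = -(D (N + 1)) + a (N + 1) • LinearMap.id)
    (hLR : ∀ N : ℕ, (L N).comp (R N) = -(D N) + b N • LinearMap.id)
    (hD0 : D 0 = a 0 • LinearMap.id)
    (n j k : ℕ) (f : V n) (hf : KerL L n f) :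
    LIter L (n + j) k (RIter R (n + j) k (RIter R n j f)) =
      (∏ h ∈ Finset.Ico (n + j) (n + j + k), ∑ i ∈ Finset.Icc n h, (b i - a i)) •
        RIter R n j f :=
  iterated_lowering_of_iterated_raising_general D R L a b hRL hLR hD0 n j k f hf
end
end

section
/- Under the abstract factorization hypotheses, if 0 ≤ n ≤ m ≤ N, f₁ ∈ ker ℒ_m and f₂ ∈ ker ℒ_n, then ⟨ℛ_{N−1}ℛ_{N−2}⋯ℛ_m f₁, ℛ_{N−1}ℛ_{N−2}⋯ℛ_n f₂⟩_{V_N} = δ_{n,m} · [∏_{h=n}^{N−1} ∑_{k=n}^{h}(b_k − a_k)] · ⟨f₁, f₂⟩_{V_n}, where δ_{n,m} is the Kronecker delta. -/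
open scoped ComplexInnerProductSpace

noncomputable section

variable {V : ℕ → Type*} [∀ N, NormedAddCommGroup (V N)] [∀ N, InnerProductSpace ℂ (V N)]

/-- Under the abstract factorization hypotheses, if `0 ≤ n ≤ m ≤ N`, `f₁ ∈ ker ℒ_m` and
`f₂ ∈ ker ℒ_n`, then
`⟨ℛ_{N-1}⋯ℛ_m f₁, ℛ_{N-1}⋯ℛ_n f₂⟩_{V_N}
  = δ_{n,m} (∏_{h=n}^{N-1} ∑_{k'=n}^{h} (b_{k'} - a_{k'})) ⟨f₁, f₂⟩_{V_n}`.
The case `n = m` (Kronecker delta equal to `1`, with `N = n + k`) is the first clause; the case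
`n < m` (Kronecker delta equal to `0`, with `m = n + j + 1` and `N = m + k`) is the second. -/
theorem iterated_raising_orthogonality
    [∀ N, FiniteDimensional ℂ (V N)]
    (hdim : ∀ N, Module.finrank ℂ (V N) = N + 1)
    (D : ∀ N, V N →ₗ[ℂ] V N) (hsym : ∀ N, (D N).IsSymmetric)
    (R : ∀ N, V N →ₗ[ℂ] V (N + 1)) (L : ∀ N, V (N + 1) →ₗ[ℂ] V N)
    (a b : ℕ → ℂ)
    (hAdj : ∀ (N : ℕ) (f₁ : V N) (f₂ : V (N + 1)), ⟪R N f₁, f₂⟫ = ⟪f₁, L N f₂⟫)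
    (hRL : ∀ N : ℕ, (R N).comp (L N) = -(D (N + 1)) + a (N + 1) • LinearMap.id)
    (hLR : ∀ N : ℕ, (L N).comp (R N) = -(D N) + b N • LinearMap.id)
    (hD0 : D 0 = a 0 • LinearMap.id) :
    (∀ (n k : ℕ) (f₁ f₂ : V n), KerL L n f₁ → KerL L n f₂ →
        ⟪RIter R n k f₁, RIter R n k f₂⟫ =
          (∏ h ∈ Finset.Ico n (n + k), ∑ i ∈ Finset.Icc n h, (b i - a i)) * ⟪f₁, f₂⟫) ∧
    (∀ (n j k : ℕ) (f₁ : V (n + (j + 1))) (f₂ : V n),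
        KerL L (n + (j + 1)) f₁ → KerL L n f₂ →
        ⟪RIter R (n + (j + 1)) k f₁,
          RIter R (n + (j + 1)) k (RIter R n (j + 1) f₂)⟫ = 0) := by
  have hcomm : ∀ (p : ℕ) (x : V (p + 1)),
      L (p + 1) (R (p + 1) x) = R p (L p x) + (b (p + 1) - a (p + 1)) • x := by
    intro p x
    have h1 := LinearMap.congr_fun (hLR (p + 1)) x
    have h2 := LinearMap.congr_fun (hRL p) x
    simp only [LinearMap.comp_apply, LinearMap.add_apply, LinearMap.neg_apply,
      LinearMap.smul_apply, LinearMap.id_apply] at h1 h2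
    rw [h1, h2, sub_smul]
    abel
  have hbase0 : ∀ x : V 0, L 0 (R 0 x) = (b 0 - a 0) • x := by
    intro x
    have h1 := LinearMap.congr_fun (hLR 0) x
    simp only [hD0, LinearMap.comp_apply, LinearMap.add_apply, LinearMap.neg_apply,
      LinearMap.smul_apply, LinearMap.id_apply] at h1
    rw [h1, sub_smul]
    abel
  have key : ∀ (n : ℕ) (f : V n), KerL L n f → ∀ k : ℕ,
      L (n + k) (RIter R n (k + 1) f) =
        (∑ i ∈ Finset.Icc n (n + k), (b i - a i)) • RIter R n k f := by
    intro n f hf k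
    induction k with
    | zero =>
      simp only [Nat.add_zero, Finset.Icc_self, Finset.sum_singleton]
      show L n (R n (RIter R n 0 f)) = (b n - a n) • RIter R n 0 f
      cases n with
      | zero => exact hbase0 _
      | succ p =>
        rw [hcomm p]
        have h0 : L p (RIter R (p + 1) 0 f) = 0 := hf
        rw [h0, map_zero, zero_add]
    | succ k ih =>
      show L (n + k + 1) (R (n + k + 1) (RIter R n (k + 1) f)) = _
      have hsum : (∑ i ∈ Finset.Icc n (n + (k + 1)), (b i - a i))
          = (∑ i ∈ Finset.Icc n (n + k), (b i - a i)) + (b (n + k + 1) - a (n + k + 1)) :=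
        Finset.sum_Icc_succ_top (Nat.le_succ_of_le (Nat.le_add_right n k)) _
      rw [hcomm (n + k), ih, map_smul, hsum, add_smul]
      rfl
  have adj' : ∀ (N : ℕ) (x : V (N + 1)) (y : V N), ⟪x, R N y⟫ = ⟪L N x, y⟫ := by
    intro N x y
    rw [← inner_conj_symm, hAdj, inner_conj_symm]
  constructor
  · intro n k f₁ f₂ h₁ h₂
    induction k with
    | zero => simp [RIter]
    | succ k ih =>
      show ⟪R (n + k) (RIter R n k f₁), R (n + k) (RIter R n k f₂)⟫ = _
      rw [hAdj]
      have hk := key n f₂ h₂ k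
      rw [show R (n + k) (RIter R n k f₂) = RIter R n (k + 1) f₂ from rfl, hk,
        inner_smul_right, ih]
      have hprod : (∏ h ∈ Finset.Ico n (n + (k + 1)), ∑ i ∈ Finset.Icc n h, (b i - a i))
          = (∏ h ∈ Finset.Ico n (n + k), ∑ i ∈ Finset.Icc n h, (b i - a i)) *
            (∑ i ∈ Finset.Icc n (n + k), (b i - a i)) :=
        Finset.prod_Ico_succ_top (Nat.le_add_right n k) _
      rw [hprod]
      ring
  · intro n j k f₁ f₂ h₁ h₂
    induction k with
    | zero =>
      have h0 : L (n + j) f₁ = 0 := h₁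
      show ⟪f₁, R (n + j) (RIter R n j f₂)⟫ = 0
      exact (adj' (n + j) f₁ (RIter R n j f₂)).trans (by rw [h0]; exact inner_zero_left _)
    | succ k ih =>
      show ⟪R (n + (j + 1) + k) (RIter R (n + (j + 1)) k f₁),
        R (n + (j + 1) + k) (RIter R (n + (j + 1)) k (RIter R n (j + 1) f₂))⟫ = 0
      rw [adj']
      have hk := key (n + (j + 1)) f₁ h₁ k
      rw [show R (n + (j + 1) + k) (RIter R (n + (j + 1)) k f₁)
          = RIter R (n + (j + 1)) (k + 1) f₁ from rfl, hk, inner_smul_left, ih, mul_zero]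
end
end

section
/- Under the abstract factorization hypotheses, if N ≥ n ≥ 0 and f ∈ ker ℒ_n, then ℛ_{N−1}ℛ_{N−2}⋯ℛ_n f is an eigenvector of 𝒟_N: 𝒟_N (ℛ_{N−1}ℛ_{N−2}⋯ℛ_n f) = [a_N − ∑_{k=n}^{N−1}(b_k − a_k)] · ℛ_{N−1}ℛ_{N−2}⋯ℛ_n f. -/
open scoped ComplexInnerProductSpace

noncomputable section

variable {V : ℕ → Type*} [∀ N, NormedAddCommGroup (V N)] [∀ N, InnerProductSpace ℂ (V N)]

/-- Under the abstract factorization hypotheses, if `N = n + k ≥ n ≥ 0` and `f ∈ ker ℒ_n`, then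
`ℛ_{N-1}⋯ℛ_n f` is an eigenvector of `𝒟_N`:
`𝒟_N (ℛ_{N-1}⋯ℛ_n f) = (a_N - ∑_{k'=n}^{N-1} (b_{k'} - a_{k'})) • (ℛ_{N-1}⋯ℛ_n f)`. -/
theorem iterated_raising_eigenvector
    [∀ N, FiniteDimensional ℂ (V N)]
    (hdim : ∀ N, Module.finrank ℂ (V N) = N + 1)
    (D : ∀ N, V N →ₗ[ℂ] V N) (hsym : ∀ N, (D N).IsSymmetric)
    (R : ∀ N, V N →ₗ[ℂ] V (N + 1)) (L : ∀ N, V (N + 1) →ₗ[ℂ] V N)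
    (a b : ℕ → ℂ)
    (hAdj : ∀ (N : ℕ) (f₁ : V N) (f₂ : V (N + 1)), ⟪R N f₁, f₂⟫ = ⟪f₁, L N f₂⟫)
    (hRL : ∀ N : ℕ, (R N).comp (L N) = -(D (N + 1)) + a (N + 1) • LinearMap.id)
    (hLR : ∀ N : ℕ, (L N).comp (R N) = -(D N) + b N • LinearMap.id)
    (hD0 : D 0 = a 0 • LinearMap.id)
    (n k : ℕ) (f : V n) (hf : KerL L n f) :
    D (n + k) (RIter R n k f) =
      (a (n + k) - ∑ i ∈ Finset.Ico n (n + k), (b i - a i)) • RIter R n k f := by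
  induction k with
  | zero =>
    simp only [Nat.add_zero, Finset.Ico_self, Finset.sum_empty, sub_zero]
    cases n with
    | zero =>
      simp [RIter, hD0]
    | succ m =>
      have h := LinearMap.congr_fun (hRL m) f
      simp only [KerL] at hf
      simp only [RIter, LinearMap.comp_apply, hf, map_zero, LinearMap.add_apply,
        LinearMap.neg_apply, LinearMap.smul_apply, LinearMap.id_apply] at h ⊢
      have h' : -(D (m + 1) f) + a (m + 1) • f = 0 := h.symm
      exact neg_add_eq_zero.mp h'
  | succ k ih =>
    set g := RIter R n k f with hg
    have h1 := LinearMap.congr_fun (hLR (n + k)) g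
    have h2 := LinearMap.congr_fun (hRL (n + k)) (R (n + k) g)
    simp only [LinearMap.comp_apply, LinearMap.add_apply, LinearMap.neg_apply,
      LinearMap.smul_apply, LinearMap.id_apply] at h1 h2
    rw [ih] at h1
    rw [h1, map_add, map_neg, map_smul, map_smul] at h2
    have hsum : ∑ i ∈ Finset.Ico n (n + k + 1), (b i - a i)
        = (∑ i ∈ Finset.Ico n (n + k), (b i - a i)) + (b (n + k) - a (n + k)) := by
      rw [Finset.sum_Ico_succ_top (Nat.le_add_right n k)]
    show D (n + k + 1) (R (n + k) g) =
      (a (n + k + 1) - ∑ i ∈ Finset.Ico n (n + k + 1), (b i - a i)) • R (n + k) g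
    rw [hsum]
    have h4 : D (n + k + 1) (R (n + k) g) =
        a (n + k + 1) • R (n + k) g -
          (-((a (n + k) - ∑ i ∈ Finset.Ico n (n + k), (b i - a i)) • R (n + k) g)
            + b (n + k) • R (n + k) g) := by
      rw [h2]; abel
    rw [h4]
    module
end
end

section
/- Under the abstract factorization hypotheses, suppose additionally that every partial sum ∑_{k=n}^{h}(b_k − a_k) (0 ≤ n ≤ h) is nonzero, that ker ℒ_n is nontrivial for every n ≥ 0, and choose nonzero vectors φ_n ∈ ker ℒ_n. Set f_{N,n} = ℛ_{N−1}ℛ_{N−2}⋯ℛ_n φ_n for 0 ≤ n ≤ N. Then f_{N,0}, f_{N,1}, …, f_{N,N} are N+1 pairwise orthogonal nonzero eigenvectors of 𝒟_N, hence an orthogonal basis of V_N; moreover ℛ_N f_{N,n} = f_{N+1,n} and ℒ_N f_{N,n} = [∑_{k=n}^{N−1}(b_k − a_k)] f_{N−1,n}. -/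
open scoped ComplexInnerProductSpace

noncomputable section

variable {V : ℕ → Type*} [∀ N, NormedAddCommGroup (V N)] [∀ N, InnerProductSpace ℂ (V N)]

/-- Transport of a vector along an equality of indices. -/
def vcastV {i j : ℕ} (h : i = j) (v : V i) : V j := by subst h; exact v

/-!
Along the chain `φ_n, ℛ φ_n, ℛ² φ_n, …` the identities `ℒℛ = -𝒟 + b` and `ℛℒ = -𝒟 + a` show
inductively that each vector is an eigenvector of `𝒟`, the eigenvalue dropping by `b_N - a_{N+1}`
at each step, and that `ℒ` undoes `ℛ` up to the factor `∑_{k=n}^{N} (b_k - a_k)`; nonvanishing of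
these sums keeps every `f_{N,n}` nonzero. Orthogonality comes from
`⟪ℛu, ℛv⟫ = ⟪u, ℒℛv⟫ = (b_N - μ)⟪u, v⟫` for an eigenvector `v`, which reduces `⟪f_{N,m}, f_{N,n}⟫`
(`n < m`) to `⟪φ_m, ℛ f_{m-1,n}⟫ = ⟪ℒ φ_m, f_{m-1,n}⟫ = 0`. Being `N + 1` orthogonal nonzero
vectors in the `(N + 1)`-dimensional space `V_N`, the `f_{N,n}` span it.
-/

omit [∀ N, NormedAddCommGroup (V N)] [∀ N, InnerProductSpace ℂ (V N)] in
theorem vcastV_trans {i j l : ℕ} (h₁ : i = j) (h₂ : j = l) (v : V i) :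
    vcastV h₂ (vcastV h₁ v) = vcastV (h₁.trans h₂) v := by
  subst h₁ h₂; rfl

omit [∀ N, InnerProductSpace ℂ (V N)] in
theorem vcastV_ne_zero {i j : ℕ} (h : i = j) {v : V i} (hv : v ≠ 0) : vcastV h v ≠ 0 := by
  subst h; exact hv

theorem map_vcastV (R : ∀ N, V N →ₗ[ℂ] V (N + 1)) {i j : ℕ} (h : i = j) (v : V i) :
    R j (vcastV h v) = vcastV (congrArg (· + 1) h) (R i v) := by
  subst h; rfl

theorem RIter_succ_apply (R : ∀ N, V N →ₗ[ℂ] V (N + 1)) (n k : ℕ) (v : V n) :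
    RIter R n (k + 1) v = R (n + k) (RIter R n k v) := rfl

theorem RIter_add_apply (R : ∀ N, V N →ₗ[ℂ] V (N + 1)) (n p q : ℕ) (v : V n) :
    RIter R n (p + q) v = vcastV (Nat.add_assoc n p q) (RIter R (n + p) q (RIter R n p v)) := by
  induction q with
  | zero => rfl
  | succ q ih => exact (congrArg (R (n + (p + q))) ih).trans (map_vcastV R _ _)

section Factorization

variable (D : ∀ N, V N →ₗ[ℂ] V N) (R : ∀ N, V N →ₗ[ℂ] V (N + 1))
  (L : ∀ N, V (N + 1) →ₗ[ℂ] V N) (a b : ℕ → ℂ)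

theorem lower_raise_eigenvector
    (hLR : ∀ N : ℕ, (L N).comp (R N) = -(D N) + b N • LinearMap.id)
    {N : ℕ} {v : V N} {μ : ℂ} (hv : D N v = μ • v) :
    L N (R N v) = (b N - μ) • v := by
  have h := LinearMap.congr_fun (hLR N) v
  simp only [LinearMap.comp_apply, LinearMap.add_apply, LinearMap.neg_apply,
    LinearMap.smul_apply, LinearMap.id_apply] at h
  rw [h, hv]
  module

theorem raise_eigenvector
    (hRL : ∀ N : ℕ, (R N).comp (L N) = -(D (N + 1)) + a (N + 1) • LinearMap.id)
    (hLR : ∀ N : ℕ, (L N).comp (R N) = -(D N) + b N • LinearMap.id)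
    {N : ℕ} {v : V N} {μ : ℂ} (hv : D N v = μ • v) :
    D (N + 1) (R N v) = (a (N + 1) - (b N - μ)) • R N v := by
  have h := LinearMap.congr_fun (hRL N) (R N v)
  simp only [LinearMap.comp_apply, LinearMap.add_apply, LinearMap.neg_apply,
    LinearMap.smul_apply, LinearMap.id_apply] at h
  rw [lower_raise_eigenvector D R L b hLR hv, map_smul] at h
  rw [sub_smul, h]
  module

theorem exists_eigenvalue_RIter
    (hRL : ∀ N : ℕ, (R N).comp (L N) = -(D (N + 1)) + a (N + 1) • LinearMap.id)
    (hLR : ∀ N : ℕ, (L N).comp (R N) = -(D N) + b N • LinearMap.id)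
    {m : ℕ} {v : V m} (hv : ∃ μ : ℂ, D m v = μ • v) (k : ℕ) :
    ∃ μ : ℂ, D (m + k) (RIter R m k v) = μ • RIter R m k v := by
  induction k with
  | zero => exact hv
  | succ k ih =>
    obtain ⟨μ, hμ⟩ := ih
    exact ⟨_, raise_eigenvector D R L a b hRL hLR hμ⟩

theorem inner_raise_raise_of_eigenvector
    (hAdj : ∀ (N : ℕ) (f₁ : V N) (f₂ : V (N + 1)), ⟪R N f₁, f₂⟫ = ⟪f₁, L N f₂⟫)
    (hLR : ∀ N : ℕ, (L N).comp (R N) = -(D N) + b N • LinearMap.id)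
    {N : ℕ} (u : V N) {v : V N} {μ : ℂ} (hv : D N v = μ • v) :
    ⟪R N u, R N v⟫ = (b N - μ) * ⟪u, v⟫ := by
  rw [hAdj, lower_raise_eigenvector D R L b hLR hv, inner_smul_right]

theorem inner_RIter_eq_zero
    (hAdj : ∀ (N : ℕ) (f₁ : V N) (f₂ : V (N + 1)), ⟪R N f₁, f₂⟫ = ⟪f₁, L N f₂⟫)
    (hRL : ∀ N : ℕ, (R N).comp (L N) = -(D (N + 1)) + a (N + 1) • LinearMap.id)
    (hLR : ∀ N : ℕ, (L N).comp (R N) = -(D N) + b N • LinearMap.id)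
    {m : ℕ} {u v : V m} (hv : ∃ μ : ℂ, D m v = μ • v) (huv : ⟪u, v⟫ = 0) (k : ℕ) :
    ⟪RIter R m k u, RIter R m k v⟫ = 0 := by
  induction k with
  | zero => exact huv
  | succ k ih =>
    obtain ⟨μ, hμ⟩ := exists_eigenvalue_RIter D R L a b hRL hLR hv k
    rw [RIter_succ_apply, RIter_succ_apply,
      inner_raise_raise_of_eigenvector D R L b hAdj hLR _ hμ, ih, mul_zero]

theorem KerL.eigenvector
    (hRL : ∀ N : ℕ, (R N).comp (L N) = -(D (N + 1)) + a (N + 1) • LinearMap.id)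
    (hD0 : D 0 = a 0 • LinearMap.id) {n : ℕ} {v : V n} (hv : KerL L n v) :
    D n v = a n • v := by
  cases n with
  | zero => rw [hD0]; rfl
  | succ m =>
    have h := LinearMap.congr_fun (hRL m) v
    simp only [LinearMap.comp_apply, LinearMap.add_apply, LinearMap.neg_apply,
      LinearMap.smul_apply, LinearMap.id_apply, show L m v = 0 from hv, map_zero] at h
    exact neg_add_eq_zero.mp h.symm

section Kernel

variable {n : ℕ} {v : V n}

theorem RIter_eigenvector
    (hRL : ∀ N : ℕ, (R N).comp (L N) = -(D (N + 1)) + a (N + 1) • LinearMap.id)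
    (hLR : ∀ N : ℕ, (L N).comp (R N) = -(D N) + b N • LinearMap.id)
    (hD0 : D 0 = a 0 • LinearMap.id) (hv : KerL L n v) (k : ℕ) :
    D (n + k) (RIter R n k v) =
      (a (n + k) - ∑ i ∈ Finset.Ico n (n + k), (b i - a i)) • RIter R n k v := by
  induction k with
  | zero => simpa [RIter] using hv.eigenvector D R L a hRL hD0
  | succ k ih =>
    refine (raise_eigenvector D R L a b hRL hLR ih).trans ?_
    congr 1
    rw [← Nat.add_assoc, Finset.sum_Ico_succ_top (Nat.le_add_right n k)]
    ring

theorem lower_RIter_succ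
    (hRL : ∀ N : ℕ, (R N).comp (L N) = -(D (N + 1)) + a (N + 1) • LinearMap.id)
    (hLR : ∀ N : ℕ, (L N).comp (R N) = -(D N) + b N • LinearMap.id)
    (hD0 : D 0 = a 0 • LinearMap.id) (hv : KerL L n v) (k : ℕ) :
    L (n + k) (RIter R n (k + 1) v) =
      (∑ i ∈ Finset.Ico n (n + (k + 1)), (b i - a i)) • RIter R n k v := by
  rw [RIter_succ_apply,
    lower_raise_eigenvector D R L b hLR (RIter_eigenvector D R L a b hRL hLR hD0 hv k),
    ← Nat.add_assoc, Finset.sum_Ico_succ_top (Nat.le_add_right n k)]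
  congr 1
  ring

theorem RIter_ne_zero
    (hRL : ∀ N : ℕ, (R N).comp (L N) = -(D (N + 1)) + a (N + 1) • LinearMap.id)
    (hLR : ∀ N : ℕ, (L N).comp (R N) = -(D N) + b N • LinearMap.id)
    (hD0 : D 0 = a 0 • LinearMap.id)
    (hsum : ∀ h : ℕ, n ≤ h → (∑ i ∈ Finset.Icc n h, (b i - a i)) ≠ 0)
    (hv : KerL L n v) (hv0 : v ≠ 0) (k : ℕ) :
    RIter R n k v ≠ 0 := by
  induction k with
  | zero => exact hv0
  | succ k ih =>
    intro hzero
    have hlower := lower_RIter_succ D R L a b hRL hLR hD0 hv k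
    rw [hzero, map_zero, ← Nat.add_assoc, Finset.Ico_add_one_right_eq_Icc] at hlower
    exact ih ((smul_eq_zero.mp hlower.symm).resolve_left (hsum (n + k) (Nat.le_add_right n k)))

theorem inner_RIter_kernel_eq_zero
    (hAdj : ∀ (N : ℕ) (f₁ : V N) (f₂ : V (N + 1)), ⟪R N f₁, f₂⟫ = ⟪f₁, L N f₂⟫)
    (hRL : ∀ N : ℕ, (R N).comp (L N) = -(D (N + 1)) + a (N + 1) • LinearMap.id)
    (hLR : ∀ N : ℕ, (L N).comp (R N) = -(D N) + b N • LinearMap.id)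
    (hD0 : D 0 = a 0 • LinearMap.id) (hv : KerL L n v)
    {j : ℕ} {w : V (n + (j + 1))} (hw : KerL L (n + (j + 1)) w) (k : ℕ) :
    ⟪RIter R (n + (j + 1)) k w, RIter R (n + (j + 1)) k (RIter R n (j + 1) v)⟫ = 0 := by
  refine inner_RIter_eq_zero D R L a b hAdj hRL hLR
    ⟨_, RIter_eigenvector D R L a b hRL hLR hD0 hv (j + 1)⟩ ?_ k
  have hlower : L (n + j) w = 0 := hw
  rw [inner_eq_zero_symm, RIter_succ_apply, hAdj, hlower, inner_zero_right]

theorem inner_vcastV_RIter_eq_zero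
    (hAdj : ∀ (N : ℕ) (f₁ : V N) (f₂ : V (N + 1)), ⟪R N f₁, f₂⟫ = ⟪f₁, L N f₂⟫)
    (hRL : ∀ N : ℕ, (R N).comp (L N) = -(D (N + 1)) + a (N + 1) • LinearMap.id)
    (hLR : ∀ N : ℕ, (L N).comp (R N) = -(D N) + b N • LinearMap.id)
    (hD0 : D 0 = a 0 • LinearMap.id) (hv : KerL L n v)
    {m : ℕ} {w : V m} (hw : KerL L m w) (hnm : n < m)
    {N k l : ℕ} (hm : m + l = N) (hn : n + k = N) :
    ⟪vcastV hm (RIter R m l w), vcastV hn (RIter R n k v)⟫ = 0 := by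
  obtain ⟨j, rfl⟩ : ∃ j, m = n + (j + 1) := ⟨m - n - 1, by omega⟩
  obtain rfl : k = (j + 1) + l := by omega
  subst hm
  rw [RIter_add_apply, vcastV_trans]
  exact inner_RIter_kernel_eq_zero D R L a b hAdj hRL hLR hD0 hv hw l

end Kernel

theorem span_vcastV_RIter_eq_top
    (hdim : ∀ N, Module.finrank ℂ (V N) = N + 1)
    (hAdj : ∀ (N : ℕ) (f₁ : V N) (f₂ : V (N + 1)), ⟪R N f₁, f₂⟫ = ⟪f₁, L N f₂⟫)
    (hRL : ∀ N : ℕ, (R N).comp (L N) = -(D (N + 1)) + a (N + 1) • LinearMap.id)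
    (hLR : ∀ N : ℕ, (L N).comp (R N) = -(D N) + b N • LinearMap.id)
    (hD0 : D 0 = a 0 • LinearMap.id)
    (hsum : ∀ n h : ℕ, n ≤ h → (∑ i ∈ Finset.Icc n h, (b i - a i)) ≠ 0)
    (φ : ∀ n, V n) (hφker : ∀ n, KerL L n (φ n)) (hφne : ∀ n, φ n ≠ 0) (N : ℕ) :
    Submodule.span ℂ
      {v : V N | ∃ (n k : ℕ) (h : n + k = N), v = vcastV h (RIter R n k (φ n))} = ⊤ := by
  let f : Fin (N + 1) → V N := fun i =>
    vcastV (Nat.add_sub_of_le (Nat.lt_succ_iff.mp i.isLt)) (RIter R i (N - i) (φ i))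
  have hne : ∀ i, f i ≠ 0 := fun i =>
    vcastV_ne_zero _ (RIter_ne_zero D R L a b hRL hLR hD0 (hsum i) (hφker i) (hφne i) _)
  have horth : Pairwise fun i j => ⟪f i, f j⟫ = 0 := by
    intro i j hij
    rcases lt_or_gt_of_ne hij with hlt | hgt
    · exact inner_eq_zero_symm.mp <|
        inner_vcastV_RIter_eq_zero D R L a b hAdj hRL hLR hD0 (hφker i) (hφker j) hlt _ _
    · exact inner_vcastV_RIter_eq_zero D R L a b hAdj hRL hLR hD0 (hφker j) (hφker i) hgt _ _
  have hspan : Submodule.span ℂ (Set.range f) = ⊤ :=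
    (linearIndependent_of_ne_zero_of_inner_eq_zero hne horth).span_eq_top_of_card_eq_finrank
      (by simp [hdim N])
  refine top_unique (hspan ▸ Submodule.span_mono ?_)
  rintro _ ⟨i, rfl⟩
  exact ⟨i, N - i, _, rfl⟩

end Factorization

theorem complete_orthogonal_eigenvector_system_general
    (hdim : ∀ N, Module.finrank ℂ (V N) = N + 1)
    (D : ∀ N, V N →ₗ[ℂ] V N)
    (R : ∀ N, V N →ₗ[ℂ] V (N + 1)) (L : ∀ N, V (N + 1) →ₗ[ℂ] V N)
    (a b : ℕ → ℂ)
    (hAdj : ∀ (N : ℕ) (f₁ : V N) (f₂ : V (N + 1)), ⟪R N f₁, f₂⟫ = ⟪f₁, L N f₂⟫)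
    (hRL : ∀ N : ℕ, (R N).comp (L N) = -(D (N + 1)) + a (N + 1) • LinearMap.id)
    (hLR : ∀ N : ℕ, (L N).comp (R N) = -(D N) + b N • LinearMap.id)
    (hD0 : D 0 = a 0 • LinearMap.id)
    (hsum : ∀ n h : ℕ, n ≤ h → (∑ i ∈ Finset.Icc n h, (b i - a i)) ≠ 0)
    (φ : ∀ n, V n) (hφker : ∀ n, KerL L n (φ n)) (hφne : ∀ n, φ n ≠ 0) :
    (∀ n k : ℕ, RIter R n k (φ n) ≠ 0) ∧
    (∀ n j k : ℕ,
        ⟪RIter R (n + (j + 1)) k (φ (n + (j + 1))),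
          RIter R (n + (j + 1)) k (RIter R n (j + 1) (φ n))⟫ = 0) ∧
    (∀ n k : ℕ,
        D (n + k) (RIter R n k (φ n)) =
          (a (n + k) - ∑ i ∈ Finset.Ico n (n + k), (b i - a i)) • RIter R n k (φ n)) ∧
    (∀ N : ℕ,
        Submodule.span ℂ
            {v : V N | ∃ (n k : ℕ) (h : n + k = N), v = vcastV h (RIter R n k (φ n))} = ⊤) ∧
    (∀ n k : ℕ, R (n + k) (RIter R n k (φ n)) = RIter R n (k + 1) (φ n)) ∧
    (∀ n k : ℕ,
        L (n + k) (RIter R n (k + 1) (φ n)) =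
          (∑ i ∈ Finset.Ico n (n + (k + 1)), (b i - a i)) • RIter R n k (φ n)) :=
  ⟨fun n => RIter_ne_zero D R L a b hRL hLR hD0 (hsum n) (hφker n) (hφne n),
    fun n _ => inner_RIter_kernel_eq_zero D R L a b hAdj hRL hLR hD0 (hφker n) (hφker _),
    fun n => RIter_eigenvector D R L a b hRL hLR hD0 (hφker n),
    span_vcastV_RIter_eq_top D R L a b hdim hAdj hRL hLR hD0 hsum φ hφker hφne,
    fun _ _ => rfl,
    fun n => lower_RIter_succ D R L a b hRL hLR hD0 (hφker n)⟩

/-- Under the abstract factorization hypotheses, assume moreover that every partial sum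
`∑_{k'=n}^{h} (b_{k'} - a_{k'})` (for `0 ≤ n ≤ h`) is nonzero, that `ker ℒ_n` is nontrivial for
every `n`, and choose nonzero `φ_n ∈ ker ℒ_n`.  Put `f_{N,n} = ℛ_{N-1}⋯ℛ_n φ_n` (here
`f_{n+k,n} = RIter R n k (φ n)`).  Then the `f_{N,n}` (`0 ≤ n ≤ N`) are nonzero (clause 1),
pairwise orthogonal (clause 2, stated for `n < m = n + j + 1`), eigenvectors of `𝒟_N`
(clause 3), and they span `V N`, hence form an orthogonal basis (clause 4); moreover
`ℛ_N f_{N,n} = f_{N+1,n}` (clause 5) and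
`ℒ_N f_{N,n} = (∑_{k'=n}^{N-1} (b_{k'} - a_{k'})) f_{N-1,n}` (clause 6, stated for
`N = n + k + 1`; for `N = n` it is the hypothesis `ℒ_n φ_n = 0`). -/
theorem complete_orthogonal_eigenvector_system
    [∀ N, FiniteDimensional ℂ (V N)]
    (hdim : ∀ N, Module.finrank ℂ (V N) = N + 1)
    (D : ∀ N, V N →ₗ[ℂ] V N) (hsym : ∀ N, (D N).IsSymmetric)
    (R : ∀ N, V N →ₗ[ℂ] V (N + 1)) (L : ∀ N, V (N + 1) →ₗ[ℂ] V N)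
    (a b : ℕ → ℂ)
    (hAdj : ∀ (N : ℕ) (f₁ : V N) (f₂ : V (N + 1)), ⟪R N f₁, f₂⟫ = ⟪f₁, L N f₂⟫)
    (hRL : ∀ N : ℕ, (R N).comp (L N) = -(D (N + 1)) + a (N + 1) • LinearMap.id)
    (hLR : ∀ N : ℕ, (L N).comp (R N) = -(D N) + b N • LinearMap.id)
    (hD0 : D 0 = a 0 • LinearMap.id)
    (hsum : ∀ n h : ℕ, n ≤ h → (∑ i ∈ Finset.Icc n h, (b i - a i)) ≠ 0)
    (φ : ∀ n, V n) (hφker : ∀ n, KerL L n (φ n)) (hφne : ∀ n, φ n ≠ 0) :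
    (∀ n k : ℕ, RIter R n k (φ n) ≠ 0) ∧
    (∀ n j k : ℕ,
        ⟪RIter R (n + (j + 1)) k (φ (n + (j + 1))),
          RIter R (n + (j + 1)) k (RIter R n (j + 1) (φ n))⟫ = 0) ∧
    (∀ n k : ℕ,
        D (n + k) (RIter R n k (φ n)) =
          (a (n + k) - ∑ i ∈ Finset.Ico n (n + k), (b i - a i)) • RIter R n k (φ n)) ∧
    (∀ N : ℕ,
        Submodule.span ℂ
            {v : V N | ∃ (n k : ℕ) (h : n + k = N), v = vcastV h (RIter R n k (φ n))} = ⊤) ∧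
    (∀ n k : ℕ, R (n + k) (RIter R n k (φ n)) = RIter R n (k + 1) (φ n)) ∧
    (∀ n k : ℕ,
        L (n + k) (RIter R n (k + 1) (φ n)) =
          (∑ i ∈ Finset.Ico n (n + (k + 1)), (b i - a i)) • RIter R n k (φ n)) :=
  complete_orthogonal_eigenvector_system_general hdim D R L a b hAdj hRL hLR hD0 hsum φ hφker hφne
end
end

section
/- Suppose that for each N the coefficients factor as B_N(x) = B⁽¹⁾_N(x)·B⁽²⁾_N(x) and D_N(x) = D⁽¹⁾_N(x)·D⁽²⁾_N(x), where for x = 0, 1, …, N: (a) B⁽¹⁾_{N−1}(x)B⁽²⁾_{N−1}(x−1) = B_N(x); (b) D⁽¹⁾_{N−1}(x−1)D⁽²⁾_{N−1}(x) = D_N(x); (c) B⁽¹⁾_{N−1}(x−1)D⁽²⁾_{N−1}(x) + D⁽¹⁾_{N−1}(x)B⁽²⁾_{N−1}(x−1) − B_N(x) − D_N(x) = a_N; (d) D⁽¹⁾_N(x)B⁽²⁾_N(x−1) + B⁽¹⁾_N(x)D⁽²⁾_N(x+1) − B_N(x) − D_N(x) = b_N, with a_N, b_N constants independent of x. Define ℛ_N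 f(x) = −B⁽²⁾_N(x−1)f(x) + D⁽²⁾_N(x)f(x−1) (a function on {0,…,N+1}) and ℒ_N f(x) = −D⁽¹⁾_{N−1}(x)f(x) + B⁽¹⁾_{N−1}(x)f(x+1) (a function on {0,…,N−1}). Then ℛ_{N−1}ℒ_N = −𝒟_N + a_N·I and ℒ_{N+1}ℛ_N = −𝒟_N + b_N·I as operators on V_N. -/
noncomputable section

/-- The second-order difference operator
`𝒟 f(x) = B(x) f(x+1) - (B(x) + D(x)) f(x) + D(x) f(x-1)`. -/
def DiffOp (B D : ℤ → ℂ) (f : ℤ → ℂ) (x : ℤ) : ℂ :=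
  B x * f (x + 1) - (B x + D x) * f x + D x * f (x - 1)

/-- The raising operator `ℛ f(x) = -B⁽²⁾(x-1) f(x) + D⁽²⁾(x) f(x-1)` built from the factors
`B⁽²⁾, D⁽²⁾` (at level `N`). -/
def RaiseOp (B2 D2 : ℤ → ℂ) (f : ℤ → ℂ) (x : ℤ) : ℂ :=
  -B2 (x - 1) * f x + D2 x * f (x - 1)

/-- The lowering operator `ℒ f(x) = -D⁽¹⁾(x) f(x) + B⁽¹⁾(x) f(x+1)` built from the factors
`D⁽¹⁾, B⁽¹⁾` (at level `N-1`). -/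
def LowerOp (D1 B1 : ℤ → ℂ) (f : ℤ → ℂ) (x : ℤ) : ℂ :=
  -D1 x * f x + B1 x * f (x + 1)

/-- Sufficient conditions for the factorization of a second-order difference operator.
If `B_N = B⁽¹⁾_N ⬝ B⁽²⁾_N`, `D_N = D⁽¹⁾_N ⬝ D⁽²⁾_N` and the four relations (a)–(d) hold for
`x = 0, 1, …, N` with constants `a_N`, `b_N`, then, with
`ℛ_N f(x) = -B⁽²⁾_N(x-1) f(x) + D⁽²⁾_N(x) f(x-1)` and
`ℒ_N f(x) = -D⁽¹⁾_{N-1}(x) f(x) + B⁽¹⁾_{N-1}(x) f(x+1)`, one has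
`ℛ_{N-1} ℒ_N = -𝒟_N + a_N I` and `ℒ_{N+1} ℛ_N = -𝒟_N + b_N I` as operators on `V_N`
(that is, pointwise at every `x ∈ {0, 1, …, N}`). -/
theorem factorization_of_second_order_difference_operator
    (N : ℕ) (hN : 1 ≤ N)
    (B D B1 B2 D1 D2 : ℕ → ℤ → ℂ) (aN bN : ℂ)
    (hfacB : ∀ (M : ℕ) (x : ℤ), B M x = B1 M x * B2 M x)
    (hfacD : ∀ (M : ℕ) (x : ℤ), D M x = D1 M x * D2 M x)
    (ha : ∀ x : ℤ, 0 ≤ x → x ≤ (N : ℤ) →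
      B1 (N - 1) x * B2 (N - 1) (x - 1) = B N x)
    (hb : ∀ x : ℤ, 0 ≤ x → x ≤ (N : ℤ) →
      D1 (N - 1) (x - 1) * D2 (N - 1) x = D N x)
    (hc : ∀ x : ℤ, 0 ≤ x → x ≤ (N : ℤ) →
      B1 (N - 1) (x - 1) * D2 (N - 1) x + D1 (N - 1) x * B2 (N - 1) (x - 1)
        - B N x - D N x = aN)
    (hd : ∀ x : ℤ, 0 ≤ x → x ≤ (N : ℤ) →
      D1 N x * B2 N (x - 1) + B1 N x * D2 N (x + 1) - B N x - D N x = bN) :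
    ∀ (f : ℤ → ℂ) (x : ℤ), 0 ≤ x → x ≤ (N : ℤ) →
      RaiseOp (B2 (N - 1)) (D2 (N - 1)) (LowerOp (D1 (N - 1)) (B1 (N - 1)) f) x =
          -DiffOp (B N) (D N) f x + aN * f x ∧
      LowerOp (D1 N) (B1 N) (RaiseOp (B2 N) (D2 N) f) x =
          -DiffOp (B N) (D N) f x + bN * f x := by
  intro f x h0 hx
  have h1 := ha x h0 hx
  have h2 := hb x h0 hx
  have h3 := hc x h0 hx
  have h4 := hd x h0 hx
  have h5 := hfacB N x
  have h6 := hfacD N x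
  simp only [RaiseOp, LowerOp, DiffOp]
  have e1 : x - 1 + 1 = x := by ring
  have e2 : x + 1 - 1 = x := by ring
  rw [e1, e2]
  constructor
  · linear_combination (-f (x + 1)) * h1 + (-f (x - 1)) * h2 + f x * h3
  · linear_combination f (x + 1) * h5 + f (x - 1) * h6 + f x * h4
end
end

section
/- Let 0 < q < 1 be real and let α, β, γ, δ ∈ ℂ be nonzero. Define σ(α,β,γ,δ) = (α, β, βδ, γ/β) and τ(α,β,γ,δ) = (γ, αβ/γ, α, γδ/α). Then for every integer x such that 1−γδq^{2x} ≠ 0, 1−γδq^{2x+1} ≠ 0 and 1−γδq^{2x+2} ≠ 0, the coefficients B(x) and D(x) are invariant under the substitutions σ and τ: B and D computed at σ(α,β,γ,δ) and at τ(α,β,γ,δ) equal B and D computed at (α,β,γ,δ). Moreover, on the set {(α,β,γ,δ) ∈ ℂ⁴ : αβγδ ≠ 0} one has σ∘σ = id, τ∘τ = id and (σ∘τ)∘(σ∘τ)∘(σ∘τ) = id. -/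
noncomputable section

/-- The general q-Racah coefficient
`B(x) = (1-αq^{x+1})(1-βδq^{x+1})(1-γq^{x+1})(1-γδq^{x+1}) /
  ((1-γδq^{2x+1})(1-γδq^{2x+2}))`. -/
def qRacB (q : ℝ) (α β γ δ : ℂ) (x : ℤ) : ℂ :=
  (1 - α * (q : ℂ) ^ (x + 1)) * (1 - β * δ * (q : ℂ) ^ (x + 1)) *
      (1 - γ * (q : ℂ) ^ (x + 1)) * (1 - γ * δ * (q : ℂ) ^ (x + 1)) /
    ((1 - γ * δ * (q : ℂ) ^ (2 * x + 1)) * (1 - γ * δ * (q : ℂ) ^ (2 * x + 2)))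

/-- The general q-Racah coefficient
`D(x) = q(1-q^x)(α-γδq^x)(β-γq^x)(1-δq^x) / ((1-γδq^{2x})(1-γδq^{2x+1}))`. -/
def qRacD (q : ℝ) (α β γ δ : ℂ) (x : ℤ) : ℂ :=
  (q : ℂ) * (1 - (q : ℂ) ^ x) * (α - γ * δ * (q : ℂ) ^ x) * (β - γ * (q : ℂ) ^ x) *
      (1 - δ * (q : ℂ) ^ x) /
    ((1 - γ * δ * (q : ℂ) ^ (2 * x)) * (1 - γ * δ * (q : ℂ) ^ (2 * x + 1)))

/-- The substitution `σ(α,β,γ,δ) = (α, β, βδ, γ/β)`. -/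
def qRacSigma (p : ℂ × ℂ × ℂ × ℂ) : ℂ × ℂ × ℂ × ℂ :=
  (p.1, p.2.1, p.2.1 * p.2.2.2, p.2.2.1 / p.2.1)

/-- The substitution `τ(α,β,γ,δ) = (γ, αβ/γ, α, γδ/α)`. -/
def qRacTau (p : ℂ × ℂ × ℂ × ℂ) : ℂ × ℂ × ℂ × ℂ :=
  (p.2.2.1, p.1 * p.2.1 / p.2.2.1, p.1, p.2.2.1 * p.2.2.2 / p.1)

/-! In the coordinates `a = α`, `b = βδ`, `c = γ`, `d = γδ`, with `t = q^x`,
`B(x) = (1 - aqt)(1 - bqt)(1 - cqt)(1 - dqt) / ((1 - dqt²)(1 - dq²t²))` and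
`D(x) = q(1 - t)(a - dt)(b - dt)(c - dt) / (d(1 - dt²)(1 - dqt²))`
are symmetric in `(a, b, c)`. The substitution `σ` swaps `b` and `c`, `τ` swaps `a` and `c`, and
both fix `d`; so `B` and `D` are invariant, and `σ`, `τ` act as two transpositions of `(a, b, c)`,
whose product is a `3`-cycle. -/

section

variable {q : ℝ} {α β γ δ : ℂ}

theorem qRacB_sigma (hβ : β ≠ 0) (x : ℤ) :
    qRacB q α β (β * δ) (γ / β) x = qRacB q α β γ δ x := by
  have hb : β * (γ / β) = γ := mul_div_cancel₀ γ hβ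
  have hd : β * δ * (γ / β) = γ * δ := by rw [mul_right_comm, hb]
  unfold qRacB
  rw [hb, hd]
  ring

theorem qRacD_sigma (hβ : β ≠ 0) (x : ℤ) :
    qRacD q α β (β * δ) (γ / β) x = qRacD q α β γ δ x := by
  have hd : β * δ * (γ / β) = γ * δ := by field_simp
  have hnum (t : ℂ) : (β - β * δ * t) * (1 - γ / β * t) = (β - γ * t) * (1 - δ * t) := by
    field_simp
  unfold qRacD
  rw [hd]
  congr 1
  linear_combination (q * (1 - (q : ℂ) ^ x) * (α - γ * δ * (q : ℂ) ^ x)) * hnum ((q : ℂ) ^ x)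

theorem qRacB_tau (hα : α ≠ 0) (hγ : γ ≠ 0) (x : ℤ) :
    qRacB q γ (α * β / γ) α (γ * δ / α) x = qRacB q α β γ δ x := by
  have hb : α * β / γ * (γ * δ / α) = β * δ := by field_simp
  have hd : α * (γ * δ / α) = γ * δ := mul_div_cancel₀ _ hα
  unfold qRacB
  rw [hb, hd]
  ring

theorem qRacD_tau (hα : α ≠ 0) (hγ : γ ≠ 0) (x : ℤ) :
    qRacD q γ (α * β / γ) α (γ * δ / α) x = qRacD q α β γ δ x := by
  have hd : α * (γ * δ / α) = γ * δ := mul_div_cancel₀ _ hα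
  have hnum (t : ℂ) : (γ - γ * δ * t) * (α * β / γ - α * t) * (1 - γ * δ / α * t) =
      (α - γ * δ * t) * (β - γ * t) * (1 - δ * t) := by
    field_simp
  unfold qRacD
  rw [hd]
  congr 1
  linear_combination (q * (1 - (q : ℂ) ^ x)) * hnum ((q : ℂ) ^ x)

theorem qRacSigma_qRacSigma (hβ : β ≠ 0) :
    qRacSigma (qRacSigma (α, β, γ, δ)) = (α, β, γ, δ) := by
  simp only [qRacSigma, mul_div_cancel₀ γ hβ, mul_div_cancel_left₀ δ hβ]

theorem qRacTau_qRacTau (hα : α ≠ 0) (hγ : γ ≠ 0) :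
    qRacTau (qRacTau (α, β, γ, δ)) = (α, β, γ, δ) := by
  simp only [qRacTau, Prod.mk.injEq, true_and]
  constructor <;> field_simp

theorem qRacSigma_qRacTau (hα : α ≠ 0) (hγ : γ ≠ 0) :
    qRacSigma (qRacTau (α, β, γ, δ)) = (γ, α * β / γ, β * δ, γ / β) := by
  simp only [qRacSigma, qRacTau, Prod.mk.injEq, true_and]
  constructor
  · field_simp
  · rcases eq_or_ne β 0 with rfl | hβ
    · simp
    · field_simp

theorem qRacSigma_qRacTau_cube (hα : α ≠ 0) (hβ : β ≠ 0) (hγ : γ ≠ 0) (hδ : δ ≠ 0) :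
    qRacSigma (qRacTau (qRacSigma (qRacTau (qRacSigma (qRacTau (α, β, γ, δ)))))) =
      (α, β, γ, δ) := by
  have hβδ : β * δ ≠ 0 := mul_ne_zero hβ hδ
  have h₁ : α * β / γ * (γ / β) = α := by field_simp
  have h₂ : γ * (α * β / γ) / (β * δ) = α / δ := by field_simp
  have h₃ : β * δ / (α * β / γ) = γ * δ / α := by field_simp
  rw [qRacSigma_qRacTau hα hγ, qRacSigma_qRacTau hγ hβδ, h₁, h₂, h₃,
    qRacSigma_qRacTau hβδ hα]
  simp only [Prod.mk.injEq, true_and]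
  refine ⟨?_, ?_, ?_⟩ <;> field_simp

end

theorem qRacah_symmetries_general (q : ℝ) (α β γ δ : ℂ)
    (hα : α ≠ 0) (hβ : β ≠ 0) (hγ : γ ≠ 0) (hδ : δ ≠ 0) :
    (∀ x : ℤ,
      1 - γ * δ * (q : ℂ) ^ (2 * x) ≠ 0 →
      1 - γ * δ * (q : ℂ) ^ (2 * x + 1) ≠ 0 →
      1 - γ * δ * (q : ℂ) ^ (2 * x + 2) ≠ 0 →
        qRacB q α β (β * δ) (γ / β) x = qRacB q α β γ δ x ∧
        qRacD q α β (β * δ) (γ / β) x = qRacD q α β γ δ x ∧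
        qRacB q γ (α * β / γ) α (γ * δ / α) x = qRacB q α β γ δ x ∧
        qRacD q γ (α * β / γ) α (γ * δ / α) x = qRacD q α β γ δ x) ∧
    qRacSigma (qRacSigma (α, β, γ, δ)) = (α, β, γ, δ) ∧
    qRacTau (qRacTau (α, β, γ, δ)) = (α, β, γ, δ) ∧
    qRacSigma (qRacTau (qRacSigma (qRacTau (qRacSigma (qRacTau (α, β, γ, δ)))))) =
      (α, β, γ, δ) :=
  ⟨fun x _ _ _ => ⟨qRacB_sigma hβ x, qRacD_sigma hβ x, qRacB_tau hα hγ x, qRacD_tau hα hγ x⟩,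
    qRacSigma_qRacSigma hβ, qRacTau_qRacTau hα hγ, qRacSigma_qRacTau_cube hα hβ hγ hδ⟩

/-- The q-Racah coefficients `B` and `D` are invariant under the substitutions `σ` and `τ`;
moreover, on nonzero parameters, `σ² = τ² = (στ)³ = id` (so that `σ` and `τ` generate a group
isomorphic to the symmetric group on three objects). -/
theorem qRacah_symmetries (q : ℝ) (hq0 : 0 < q) (hq1 : q < 1) (α β γ δ : ℂ)
    (hα : α ≠ 0) (hβ : β ≠ 0) (hγ : γ ≠ 0) (hδ : δ ≠ 0) :
    (∀ x : ℤ,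
      1 - γ * δ * (q : ℂ) ^ (2 * x) ≠ 0 →
      1 - γ * δ * (q : ℂ) ^ (2 * x + 1) ≠ 0 →
      1 - γ * δ * (q : ℂ) ^ (2 * x + 2) ≠ 0 →
        qRacB q α β (β * δ) (γ / β) x = qRacB q α β γ δ x ∧
        qRacD q α β (β * δ) (γ / β) x = qRacD q α β γ δ x ∧
        qRacB q γ (α * β / γ) α (γ * δ / α) x = qRacB q α β γ δ x ∧
        qRacD q γ (α * β / γ) α (γ * δ / α) x = qRacD q α β γ δ x) ∧
    qRacSigma (qRacSigma (α, β, γ, δ)) = (α, β, γ, δ) ∧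
    qRacTau (qRacTau (α, β, γ, δ)) = (α, β, γ, δ) ∧
    qRacSigma (qRacTau (qRacSigma (qRacTau (qRacSigma (qRacTau (α, β, γ, δ)))))) =
      (α, β, γ, δ) :=
  qRacah_symmetries_general q α β γ δ hα hβ hγ hδ
end
end
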